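/- Suppose the pencil M−sN = [[s, −1, 0],[c₀+sc₁, 0, C₀+sC₁]] has full row rank at a value λ ∈ ℂ with C₀+λC₁ invertible. Then every vector v in the kernel of (M−λN)⊗I_n (viewed as acting on block vectors) is of the form v = (1, λ, Φ(λ))ᵀ ⊗ x for some x ∈ ℂⁿ, up to the normalization of the first block; consequently every eigenvector of 𝐋(λ) corresponding to a value λ that is not a pole of R has the form (1, λ, Φ(λ))ᵀ ⊗ x with R(λ)x = 0. -/

import Mathlib

open Matrix

/-- Kernel structure of the dual-basis rows: if `M−λN = [[λ,−1,0],[c₀+λc₁,0,C₀+λC₁]]`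
has full row rank `d+1` and `C₀+λC₁` is invertible, then every block vector
annihilated by `(M−λN)⊗I_n` is of the form `(x, λx, Φ(λ)⊗x)` with `x` its first
block; consequently every eigenvector of `𝐋(λ)` has this form with `R(λ)x = 0`. -/
theorem eigenvector_structure {n d m : ℕ} (lam : ℂ)
    (A0 A1 A2 : Matrix (Fin n) (Fin n) ℂ) (Am : Fin m → Matrix (Fin n) (Fin n) ℂ)
    (α : Fin m → ℂ) (a : Fin m → Fin d → ℂ)
    (c0 c1 : Fin d → ℂ) (C0 C1 : Matrix (Fin d) (Fin d) ℂ)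
    (hC : IsUnit (C0 + lam • C1)) :
    let Mlam : Matrix (Unit ⊕ Fin d) (Unit ⊕ (Unit ⊕ Fin d)) ℂ :=
      Matrix.of fun r c =>
        match r, c with
        | Sum.inl _, Sum.inl _ => lam
        | Sum.inl _, Sum.inr (Sum.inl _) => -1
        | Sum.inl _, Sum.inr (Sum.inr _) => 0
        | Sum.inr k, Sum.inl _ => c0 k + lam * c1 k
        | Sum.inr _, Sum.inr (Sum.inl _) => 0
        | Sum.inr k, Sum.inr (Sum.inr l) => C0 k l + lam * C1 k l
    ∀ _hrank : Mlam.rank = d + 1,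
    let Φ : Fin d → ℂ := -((C0 + lam • C1)⁻¹.mulVec (c0 + lam • c1))
    let R : Matrix (Fin n) (Fin n) ℂ :=
      A0 + lam • A1 + lam ^ 2 • A2 + ∑ j, (α j + a j ⬝ᵥ Φ) • Am j
    let At0 : Matrix (Fin n) (Fin n) ℂ := A0 + ∑ j, α j • Am j
    let P : Matrix (Fin n ⊕ Fin d × Fin n)
        (Fin n ⊕ (Fin n ⊕ Fin d × Fin n)) ℂ :=
      Matrix.of fun r c =>
        match r, c with
        | Sum.inl i, Sum.inl i' => lam * (if i = i' then 1 else 0)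
        | Sum.inl i, Sum.inr (Sum.inl i') => -(if i = i' then 1 else 0)
        | Sum.inl _, Sum.inr (Sum.inr _) => 0
        | Sum.inr ki, Sum.inl i' =>
            (c0 ki.1 + lam * c1 ki.1) * (if ki.2 = i' then 1 else 0)
        | Sum.inr _, Sum.inr (Sum.inl _) => 0
        | Sum.inr ki, Sum.inr (Sum.inr li') =>
            (C0 ki.1 li'.1 + lam * C1 ki.1 li'.1) * (if ki.2 = li'.2 then 1 else 0)
    let L : Matrix (Fin n ⊕ (Fin n ⊕ Fin d × Fin n))
        (Fin n ⊕ (Fin n ⊕ Fin d × Fin n)) ℂ :=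
      Matrix.of fun r c =>
        match r, c with
        | Sum.inl i, Sum.inl i' => (At0 + lam • A1) i i'
        | Sum.inl i, Sum.inr (Sum.inl i') => (lam • A2) i i'
        | Sum.inl i, Sum.inr (Sum.inr ki') => ∑ j, a j ki'.1 * Am j i ki'.2
        | Sum.inr r', c => P r' c
    ∀ v : (Fin n ⊕ (Fin n ⊕ Fin d × Fin n)) → ℂ,
      (P.mulVec v = 0 →
        v = Sum.elim (fun i : Fin n => v (Sum.inl i))
          (Sum.elim (fun i : Fin n => lam * v (Sum.inl i))
            (fun ki : Fin d × Fin n => Φ ki.1 * v (Sum.inl ki.2)))) ∧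
      (L.mulVec v = 0 →
        v = Sum.elim (fun i : Fin n => v (Sum.inl i))
          (Sum.elim (fun i : Fin n => lam * v (Sum.inl i))
            (fun ki : Fin d × Fin n => Φ ki.1 * v (Sum.inl ki.2))) ∧
        R.mulVec (fun i => v (Sum.inl i)) = 0) := by

  intro Mlam _hrank Φ R At0 P L v
  have hdet : IsUnit (C0 + lam • C1).det := (Matrix.isUnit_iff_isUnit_det _).mp hC
  have keyP : P.mulVec v = 0 → v = Sum.elim (fun i : Fin n => v (Sum.inl i))
      (Sum.elim (fun i : Fin n => lam * v (Sum.inl i))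
        (fun ki : Fin d × Fin n => Φ ki.1 * v (Sum.inl ki.2))) := by
    intro hP
    have h1 : ∀ i, v (Sum.inr (Sum.inl i)) = lam * v (Sum.inl i) := by
      intro i
      have h := congrFun hP (Sum.inl i)
      simp [P, Matrix.mulVec, dotProduct, Fintype.sum_sum_type, mul_ite, ite_mul,
        mul_zero, zero_mul, mul_one, Finset.sum_ite_eq, Finset.sum_ite_eq'] at h
      linear_combination -h
    have h2 : ∀ (i : Fin n) (l : Fin d),
        v (Sum.inr (Sum.inr (l, i))) = Φ l * v (Sum.inl i) := by
      intro i l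
      have hw : (C0 + lam • C1).mulVec (fun l => v (Sum.inr (Sum.inr (l, i)))) =
          (-(v (Sum.inl i))) • (c0 + lam • c1) := by
        funext k
        have h := congrFun hP (Sum.inr (k, i))
        simp [P, Matrix.mulVec, dotProduct, Fintype.sum_sum_type, Fintype.sum_prod_type,
          mul_ite, ite_mul, mul_zero, zero_mul, mul_one, Finset.sum_ite_eq,
          Finset.sum_ite_eq'] at h
        simp only [Matrix.mulVec, dotProduct, Matrix.add_apply, Matrix.smul_apply,
          Pi.smul_apply, Pi.add_apply, Pi.neg_apply, smul_eq_mul]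
        linear_combination h
      have h3 := congrArg (fun u => (C0 + lam • C1)⁻¹.mulVec u) hw
      simp only [Matrix.mulVec_mulVec, Matrix.nonsing_inv_mul _ hdet, Matrix.one_mulVec,
        Matrix.mulVec_smul] at h3
      have := congrFun h3 l
      simp only [Matrix.smul_mulVec, Pi.smul_apply, smul_eq_mul] at this
      simp only [Φ, Pi.neg_apply]
      rw [this]; ring
    funext r
    match r with
    | Sum.inl i => rfl
    | Sum.inr (Sum.inl i) => exact h1 i
    | Sum.inr (Sum.inr (l, i)) => exact h2 i l
  refine ⟨keyP, fun hL => ?_⟩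
  have hP : P.mulVec v = 0 := by
    funext r
    have h := congrFun hL (Sum.inr r)
    simpa [L, P, Matrix.mulVec, dotProduct] using h
  have hv := keyP hP
  refine ⟨hv, ?_⟩
  have h1 : ∀ i, v (Sum.inr (Sum.inl i)) = lam * v (Sum.inl i) := fun i => congrFun hv (Sum.inr (Sum.inl i))
  have h2 : ∀ (l : Fin d) (i : Fin n), v (Sum.inr (Sum.inr (l, i))) = Φ l * v (Sum.inl i) := fun l i => congrFun hv (Sum.inr (Sum.inr (l, i)))
  funext i
  have h := congrFun hL (Sum.inl i)
  simp only [L, Matrix.mulVec, dotProduct, Matrix.of_apply, Fintype.sum_sum_type,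
    Fintype.sum_prod_type, h1, h2, Pi.zero_apply] at h
  simp only [R, Matrix.mulVec, dotProduct, Matrix.add_apply, Matrix.smul_apply,
    Matrix.sum_apply, smul_eq_mul, Pi.zero_apply]
  have e1 : (∑ k : Fin d, ∑ x : Fin n, (∑ j, a j k * Am j i x) * (Φ k * v (Sum.inl x)))
      = ∑ x : Fin n, (∑ j, (∑ k, a j k * Φ k) * Am j i x) * v (Sum.inl x) := by
    rw [Finset.sum_comm]
    refine Finset.sum_congr rfl fun x _ => ?_
    simp only [Finset.sum_mul, Finset.mul_sum]
    rw [Finset.sum_comm]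
    refine Finset.sum_congr rfl fun j _ => ?_
    refine Finset.sum_congr rfl fun k _ => ?_
    ring
  rw [e1, ← Finset.sum_add_distrib, ← Finset.sum_add_distrib] at h
  rw [← h]
  refine Finset.sum_congr rfl fun x _ => ?_
  simp only [At0, Matrix.add_apply, Matrix.smul_apply, Matrix.sum_apply, smul_eq_mul,
    dotProduct, add_mul, Finset.sum_mul, Finset.sum_add_distrib]
  ring_nf
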